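/- Let Γ be a countable discrete group, Π a unitary representation on a separable Hilbert space H forming a dual integrable triple with Bracket [·,·] valued in L¹(R(Γ)). If ψ ∈ H is such that [ψ,ψ] ∈ L²(R(Γ)), then Σ_{γ∈Γ} |⟨ψ, Π(γ)ψ⟩|² < ∞, and consequently the Gramian of the orbit {Π(γ)ψ}_{γ∈Γ} is a closable densely defined operator on ℓ²(Γ). -/

import Mathlib

open Filter Topology

/-- The Gramian of the orbit `{Π(γ)ψ}` applied to a finitely supported sequence. -/
noncomputable def orbitGramianApply {H : Type*} [NormedAddCommGroup H] [InnerProductSpace ℂ H]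
    {Γ : Type*} [Group Γ] (U : Γ →* (H ≃ₗᵢ[ℂ] H)) (ψ : H) (c : Γ →₀ ℂ) : Γ → ℂ :=
  fun γ' => ∑ γ ∈ c.support, c γ * (inner ℂ (U γ' ψ) (U γ ψ) : ℂ)

/-!
Since `Π` is unitary, `⟪Π(γ')ψ, Π(γ)ψ⟫ = ⟪Π(γ⁻¹γ')ψ, ψ⟫`, so every row and every column of the
Gramian is a reindexing of the square-summable sequence of Fourier coefficients of `[ψ,ψ]`.
Hence the Gramian maps finitely supported sequences into `ℓ²(Γ)`, and by Cauchy–Schwarz each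
coordinate of its output is bounded by the `ℓ²` norm of its input. As `ℓ²` convergence implies
coordinatewise convergence, the closure of the graph contains no point `(0, g)` with `g ≠ 0`.
-/

section lp

variable {α : Type*}

theorem memℓp_two_iff_summable_sq {E : α → Type*} [∀ i, NormedAddCommGroup (E i)]
    {f : ∀ i, E i} : Memℓp f 2 ↔ Summable fun i => ‖f i‖ ^ 2 := by
  simp [memℓp_gen_iff]

variable {F : Type*} [NormedAddCommGroup F]

theorem memℓp_comp_equiv_iff {β : Type*} {p : ENNReal} (hp : 0 < p.toReal) (e : β ≃ α)
    {f : α → F} : Memℓp (fun i => f (e i)) p ↔ Memℓp f p := by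
  simp only [memℓp_gen_iff hp]
  exact e.summable_iff (f := fun i => ‖f i‖ ^ p.toReal)

theorem lp.dense_setOf_eq_finsupp {p : ENNReal} [Fact (1 ≤ p)] (hp : p ≠ ⊤) :
    Dense {x : lp (fun _ : α => F) p | ∃ c : α →₀ F, ∀ i, (x : α → F) i = c i} := by
  classical
  intro x
  refine mem_closure_of_tendsto (lp.hasSum_single hp x) (Eventually.of_forall fun s => ?_)
  refine ⟨∑ i ∈ s, Finsupp.single i ((x : α → F) i), fun j => ?_⟩
  rw [lp.coeFn_sum, Finset.sum_apply]
  simp [lp.single_apply, Pi.single_apply, Finsupp.single_apply, Finsupp.finsetSum_apply]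

theorem tendsto_apply_of_tendsto_tsum_norm_sub_sq {ι : Type*} {l : Filter ι} {x : ι → α → F}
    {g : α → F} (hs : ∀ n, Summable fun i => ‖x n i - g i‖ ^ 2)
    (h : Tendsto (fun n => ∑' i, ‖x n i - g i‖ ^ 2) l (𝓝 0)) (i : α) :
    Tendsto (fun n => x n i) l (𝓝 (g i)) := by
  have hsq : Tendsto (fun n => ‖x n i - g i‖ ^ 2) l (𝓝 0) :=
    squeeze_zero (fun _ => by positivity) (fun n => (hs n).le_tsum i fun _ _ => by positivity) h
  rw [tendsto_iff_norm_sub_tendsto_zero]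
  simpa using hsq.sqrt

theorem Finsupp.norm_sum_mul_le_sqrt_tsum_mul_sqrt_tsum {R : Type*} [SeminormedRing R]
    (c : α →₀ R) {k : α → R} (hk : Summable fun i => ‖k i‖ ^ 2) :
    ‖∑ i ∈ c.support, c i * k i‖ ≤ √(∑' i, ‖c i‖ ^ 2) * √(∑' i, ‖k i‖ ^ 2) := by
  have hc : ∑' i, ‖c i‖ ^ 2 = ∑ i ∈ c.support, ‖c i‖ ^ 2 :=
    tsum_eq_sum fun i hi => by simp [Finsupp.notMem_support_iff.mp hi]
  calc ‖∑ i ∈ c.support, c i * k i‖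
      ≤ ∑ i ∈ c.support, ‖c i‖ * ‖k i‖ :=
        (norm_sum_le _ _).trans (Finset.sum_le_sum fun i _ => norm_mul_le _ _)
    _ ≤ √(∑ i ∈ c.support, ‖c i‖ ^ 2) * √(∑ i ∈ c.support, ‖k i‖ ^ 2) :=
        Real.sum_mul_le_sqrt_mul_sqrt _ _ _
    _ ≤ √(∑' i, ‖c i‖ ^ 2) * √(∑' i, ‖k i‖ ^ 2) := by
        rw [hc]
        gcongr
        exact hk.sum_le_tsum _ fun _ _ => by positivity

end lp

section UnitaryRepresentation

variable {𝕜 H G : Type*} [RCLike 𝕜] [NormedAddCommGroup H] [InnerProductSpace 𝕜 H] [Group G]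
  (U : G →* (H ≃ₗᵢ[𝕜] H))

theorem inner_map_map_eq_inner_inv_mul_map (a b : G) (x y : H) :
    inner 𝕜 (U a x) (U b y) = inner 𝕜 (U (b⁻¹ * a) x) y := by
  conv_lhs => rw [← mul_inv_cancel_left b a, map_mul, LinearIsometryEquiv.coe_mul,
    Function.comp_apply, LinearIsometryEquiv.inner_map_map]

variable {U} {ψ : H} {p : ENNReal}

theorem memℓp_inner_orbit_left (hψ : Memℓp (fun γ => inner 𝕜 (U γ ψ) ψ) p)
    (hp : 0 < p.toReal) (b : G) : Memℓp (fun a => inner 𝕜 (U a ψ) (U b ψ)) p := by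
  simp_rw [inner_map_map_eq_inner_inv_mul_map]
  exact (memℓp_comp_equiv_iff (f := fun γ => inner 𝕜 (U γ ψ) ψ) hp
    (Equiv.mulLeft b⁻¹)).2 hψ

theorem memℓp_inner_orbit_right (hψ : Memℓp (fun γ => inner 𝕜 (U γ ψ) ψ) p)
    (hp : 0 < p.toReal) (a : G) : Memℓp (fun b => inner 𝕜 (U a ψ) (U b ψ)) p := by
  simp_rw [inner_map_map_eq_inner_inv_mul_map]
  exact (memℓp_comp_equiv_iff (f := fun γ => inner 𝕜 (U γ ψ) ψ) hp
    ((Equiv.inv G).trans (Equiv.mulRight a))).2 hψ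

end UnitaryRepresentation

section OrbitGramian

variable {H Γ : Type*} [NormedAddCommGroup H] [InnerProductSpace ℂ H] [Group Γ]
  {U : Γ →* (H ≃ₗᵢ[ℂ] H)} {ψ : H}

theorem memℓp_orbitGramianApply {p : ENNReal} (hψ : Memℓp (fun γ => inner ℂ (U γ ψ) ψ) p)
    (hp : 0 < p.toReal) (c : Γ →₀ ℂ) : Memℓp (orbitGramianApply U ψ c) p :=
  Memℓp.finsetSum _ fun γ _ => (memℓp_inner_orbit_left hψ hp γ).const_mul (c γ)

theorem eq_zero_of_tendsto_orbitGramianApply (hψ : Memℓp (fun γ => inner ℂ (U γ ψ) ψ) 2)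
    {f : ℕ → Γ →₀ ℂ} {g : Γ → ℂ} (hg : Memℓp g 2)
    (hf : Tendsto (fun n => ∑' γ, ‖f n γ‖ ^ 2) atTop (𝓝 0))
    (hfg : Tendsto (fun n => ∑' γ, ‖orbitGramianApply U ψ (f n) γ - g γ‖ ^ 2) atTop (𝓝 0)) :
    g = 0 := by
  funext a
  have hrow := memℓp_two_iff_summable_sq.1 (memℓp_inner_orbit_right hψ (by norm_num) a)
  have hbound : ∀ n, ‖orbitGramianApply U ψ (f n) a‖ ≤
      √(∑' γ, ‖f n γ‖ ^ 2) * √(∑' γ, ‖inner ℂ (U a ψ) (U γ ψ)‖ ^ 2) := fun n =>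
    (f n).norm_sum_mul_le_sqrt_tsum_mul_sqrt_tsum hrow
  have htend_zero : Tendsto (fun n => orbitGramianApply U ψ (f n) a) atTop (𝓝 0) :=
    squeeze_zero_norm hbound (by simpa using hf.sqrt.mul_const _)
  have htend_g : Tendsto (fun n => orbitGramianApply U ψ (f n) a) atTop (𝓝 (g a)) :=
    tendsto_apply_of_tendsto_tsum_norm_sub_sq (fun n => memℓp_two_iff_summable_sq.1
      ((memℓp_orbitGramianApply hψ (by norm_num) (f n)).sub hg)) hfg a
  exact tendsto_nhds_unique htend_g htend_zero

end OrbitGramian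

-- The paper's `⟨x, y⟩` is Mathlib's `⟪y, x⟫`.
theorem stmt_14_general {H : Type*} [NormedAddCommGroup H] [InnerProductSpace ℂ H]
    {Γ : Type*} [Group Γ]
    (U : Γ →* (H ≃ₗᵢ[ℂ] H)) (ψ : H)
    (hL2 : Memℓp (fun γ : Γ => (inner ℂ (U γ ψ) ψ : ℂ)) 2) :
    (Summable fun γ : Γ => ‖(inner ℂ (U γ ψ) ψ : ℂ)‖ ^ 2) ∧
    (∀ c : Γ →₀ ℂ, Memℓp (orbitGramianApply U ψ c) 2) ∧
    Dense {x : lp (fun _ : Γ => ℂ) 2 |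
      ∃ c : Γ →₀ ℂ, ∀ γ, (x : ∀ _ : Γ, ℂ) γ = c γ} ∧
    (∀ (f : ℕ → Γ →₀ ℂ) (g : Γ → ℂ), Memℓp g 2 →
      Tendsto (fun n => ∑' γ : Γ, ‖(f n) γ‖ ^ 2) atTop (𝓝 0) →
      Tendsto (fun n => ∑' γ : Γ, ‖orbitGramianApply U ψ (f n) γ - g γ‖ ^ 2) atTop (𝓝 0) →
      g = 0) :=
  ⟨memℓp_two_iff_summable_sq.1 hL2, memℓp_orbitGramianApply hL2 (by norm_num),
    lp.dense_setOf_eq_finsupp (by norm_num),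
    fun _ _ hg hf hfg => eq_zero_of_tendsto_orbitGramianApply hL2 hg hf hfg⟩

/-- for a dual integrable triple `(Γ, Π, H)` with operator Bracket
`[·,·]` valued in `L¹(R(Γ))`, if `[ψ,ψ] ∈ L²(R(Γ))` — equivalently (Plancherel),
its Fourier coefficients `τ([ψ,ψ]ρ(γ)) = ⟨ψ, Π(γ)ψ⟩` form an `ℓ²(Γ)` sequence —
then `∑_γ |⟨ψ, Π(γ)ψ⟩|² < ∞` and the Gramian of the orbit `{Π(γ)ψ}` is a closable
densely defined operator on `ℓ²(Γ)`. (The paper's `⟨x, y⟩` is Mathlib's `⟪y, x⟫`.) -/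
theorem stmt_14 {H : Type*} [NormedAddCommGroup H] [InnerProductSpace ℂ H]
    [CompleteSpace H] [SecondCountableTopology H]
    {Γ : Type*} [Group Γ] [Countable Γ]
    (U : Γ →* (H ≃ₗᵢ[ℂ] H)) (ψ : H)
    (hL2 : Memℓp (fun γ : Γ => (inner ℂ (U γ ψ) ψ : ℂ)) 2) :
    (Summable fun γ : Γ => ‖(inner ℂ (U γ ψ) ψ : ℂ)‖ ^ 2) ∧
    (∀ c : Γ →₀ ℂ, Memℓp (orbitGramianApply U ψ c) 2) ∧
    Dense {x : lp (fun _ : Γ => ℂ) 2 |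
      ∃ c : Γ →₀ ℂ, ∀ γ, (x : ∀ _ : Γ, ℂ) γ = c γ} ∧
    (∀ (f : ℕ → Γ →₀ ℂ) (g : Γ → ℂ), Memℓp g 2 →
      Tendsto (fun n => ∑' γ : Γ, ‖(f n) γ‖ ^ 2) atTop (𝓝 0) →
      Tendsto (fun n => ∑' γ : Γ, ‖orbitGramianApply U ψ (f n) γ - g γ‖ ^ 2) atTop (𝓝 0) →
      g = 0) :=
  stmt_14_general U ψ hL2
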